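/- arXiv:2502.11449 — 3 statements merged into one kernel-verified Lean document; each statement's English description precedes it below -/
import Mathlib

section
/- For any balanced economy (n, Z), the set of Walrasian equilibria equals the union over λ ≥ 1 of λ times the set of strong solutions of the VI ([0,1]ⁿ, -Z): WE(n,Z) = ⋃_{λ≥1} λ·SVI([0,1]ⁿ, -Z). -/
/-!
Homogeneity of `Z` makes the Walrasian equilibria a cone, and every nonnegative price vector is
`λ` times a point of the unit box for some `λ ≥ 1`, so it suffices to compare equilibria and
strong solutions inside the box. There, testing the variational inequality at `p = 0` and at the
unit vectors `eᵢ` gives `0 ≤ p* ⬝ z` and `zᵢ ≤ p* ⬝ z`; with weak Walras `p* ⬝ z ≤ 0` this is the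
equilibrium condition. Conversely `z ≤ 0` and `p* ⬝ z = 0` give `z ⬝ (p - p*) = z ⬝ p ≤ 0`
for every `p ≥ 0`.
-/

open Finset

section
variable {ι : Type*} [Fintype ι] {Z : (ι → ℝ) → Set (ι → ℝ)} {K : Set (ι → ℝ)} {x z : ι → ℝ}

def IsWalrasEquilibrium (Z : (ι → ℝ) → Set (ι → ℝ)) (p : ι → ℝ) : Prop :=
  0 ≤ p ∧ ∃ z ∈ Z p, z ≤ 0 ∧ p ⬝ᵥ z = 0

/-- `x` is a strong solution of the variational inequality `(K, -Z)`: `⟪-z, p - x⟫ ≥ 0` on `K`. -/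
def IsStrongVISolution (K : Set (ι → ℝ)) (Z : (ι → ℝ) → Set (ι → ℝ)) (x : ι → ℝ) : Prop :=
  x ∈ K ∧ ∃ z ∈ Z x, ∀ p ∈ K, z ⬝ᵥ (p - x) ≤ 0

theorem IsWalrasEquilibrium.smul
    (hom : ∀ c : ℝ, 0 < c → ∀ p : ι → ℝ, 0 ≤ p → Z (c • p) = Z p)
    (h : IsWalrasEquilibrium Z x) {c : ℝ} (hc : 0 < c) : IsWalrasEquilibrium Z (c • x) := by
  obtain ⟨hx, z, hz, hz0, hxz⟩ := h
  refine ⟨smul_nonneg hc.le hx, z, by rwa [hom c hc x hx], hz0, ?_⟩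
  rw [smul_dotProduct, hxz, smul_zero]

theorem IsWalrasEquilibrium.isStrongVISolution (h : IsWalrasEquilibrium Z x)
    (hK : K ⊆ Set.Ici 0) (hx : x ∈ K) : IsStrongVISolution K Z x := by
  obtain ⟨-, z, hz, hz0, hxz⟩ := h
  refine ⟨hx, z, hz, fun p hp => ?_⟩
  rw [dotProduct_sub, dotProduct_comm z x, hxz, sub_zero, ← neg_nonneg, ← neg_dotProduct]
  exact dotProduct_nonneg_of_nonneg (neg_nonneg.2 hz0) (hK hp)

theorem dotProduct_nonneg_of_forall_dotProduct_sub_nonpos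
    (h : ∀ p ∈ Set.Icc (0 : ι → ℝ) 1, z ⬝ᵥ (p - x) ≤ 0) : 0 ≤ x ⬝ᵥ z := by
  have := h 0 ⟨le_rfl, zero_le_one⟩
  rwa [zero_sub, dotProduct_neg, neg_nonpos, dotProduct_comm] at this

theorem le_dotProduct_of_forall_dotProduct_sub_nonpos
    (h : ∀ p ∈ Set.Icc (0 : ι → ℝ) 1, z ⬝ᵥ (p - x) ≤ 0) (i : ι) : z i ≤ x ⬝ᵥ z := by
  classical
  have hsingle : Pi.single i (1 : ℝ) ∈ Set.Icc (0 : ι → ℝ) 1 :=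
    ⟨Pi.single_nonneg.2 zero_le_one, fun j => by
      rcases eq_or_ne j i with rfl | hj <;> simp [*]⟩
  have := h _ hsingle
  rwa [dotProduct_sub, dotProduct_single_one, dotProduct_comm, sub_nonpos] at this

theorem IsStrongVISolution.isWalrasEquilibrium
    (weakWalras : ∀ p : ι → ℝ, 0 ≤ p → ∀ z ∈ Z p, p ⬝ᵥ z ≤ 0)
    (h : IsStrongVISolution (Set.Icc 0 1) Z x) : IsWalrasEquilibrium Z x := by
  obtain ⟨hx, z, hz, hvi⟩ := h
  have hxz : x ⬝ᵥ z = 0 :=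
    (weakWalras x hx.1 z hz).antisymm (dotProduct_nonneg_of_forall_dotProduct_sub_nonpos hvi)
  exact ⟨hx.1, z, hz, fun i => (le_dotProduct_of_forall_dotProduct_sub_nonpos hvi i).trans_eq hxz,
    hxz⟩

theorem exists_one_le_inv_smul_mem_Icc {q : ι → ℝ} (hq : 0 ≤ q) :
    ∃ c : ℝ, 1 ≤ c ∧ c⁻¹ • q ∈ Set.Icc (0 : ι → ℝ) 1 := by
  have hsum : 0 ≤ ∑ j, q j := sum_nonneg fun j _ => hq j
  have hc : 0 < 1 + ∑ j, q j := by linarith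
  refine ⟨1 + ∑ j, q j, by linarith, smul_nonneg (inv_nonneg.2 hc.le) hq, fun i => ?_⟩
  have hqi : q i ≤ ∑ j, q j := single_le_sum (fun j _ => hq j) (mem_univ i)
  rw [Pi.smul_apply, smul_eq_mul, inv_mul_le_iff₀ hc, Pi.one_apply, mul_one]
  linarith

end

/-- Balanced economies as VIs on the unit box: the set of Walrasian equilibria equals
`⋃_{λ ≥ 1} λ · SVI([0,1]ⁿ, -Z)`. -/
theorem balanced_WE_eq_cone_of_SVI
    {n : ℕ} (Z : (Fin n → ℝ) → Set (Fin n → ℝ))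
    (hom : ∀ lam : ℝ, 0 < lam → ∀ p : Fin n → ℝ, (∀ i, 0 ≤ p i) →
      Z (lam • p) = Z p)
    (weakWalras : ∀ p : Fin n → ℝ, (∀ i, 0 ≤ p i) → ∀ z ∈ Z p,
      ∑ j, p j * z j ≤ 0) :
    {ps : Fin n → ℝ | (∀ i, 0 ≤ ps i) ∧
        ∃ z ∈ Z ps, (∀ j, z j ≤ 0) ∧ ∑ j, ps j * z j = 0}
      = {q : Fin n → ℝ | ∃ lam : ℝ, 1 ≤ lam ∧ ∃ ps : Fin n → ℝ,
          ((∀ i, ps i ∈ Set.Icc (0 : ℝ) 1) ∧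
            ∃ z ∈ Z ps, ∀ p : Fin n → ℝ, (∀ i, p i ∈ Set.Icc (0 : ℝ) 1) →
              ∑ j, z j * (p j - ps j) ≤ 0) ∧
          q = lam • ps} := by
  simp only [← Set.mem_univ_pi, Set.pi_univ_Icc]
  change {q | IsWalrasEquilibrium Z q} =
    {q | ∃ lam : ℝ, 1 ≤ lam ∧ ∃ ps, IsStrongVISolution (Set.Icc 0 1) Z ps ∧ q = lam • ps}
  ext q
  constructor
  · intro hq
    obtain ⟨c, hc, hbox⟩ := exists_one_le_inv_smul_mem_Icc hq.1
    have hc0 : 0 < c := zero_lt_one.trans_le hc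
    refine ⟨c, hc, c⁻¹ • q, ?_, (smul_inv_smul₀ hc0.ne' q).symm⟩
    exact (hq.smul hom (inv_pos.2 hc0)).isStrongVISolution (fun p hp => hp.1) hbox
  · rintro ⟨c, hc, ps, hps, rfl⟩
    exact (hps.isWalrasEquilibrium weakWalras).smul hom (zero_lt_one.trans_le hc)
end

section
/- In a balanced economy (n, Z), every ε-strong solution p* of the VI ([0,1]ⁿ, -Z) is an ε-Walrasian equilibrium: there exists z ∈ Z(p*) such that zⱼ ≤ ε for all commodities j, and -ε ≤ p*·z ≤ ε. -/
open Finset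

section UnitCubeVI

variable {ι : Type*} [Fintype ι] {z q : ι → ℝ} {ε : ℝ}

theorem neg_dotProduct_le_of_forall_mem_Icc
    (h : ∀ p : ι → ℝ, (∀ i, p i ∈ Set.Icc (0 : ℝ) 1) → z ⬝ᵥ (p - q) ≤ ε) :
    -(q ⬝ᵥ z) ≤ ε := by
  have h0 := h 0 fun _ => ⟨le_rfl, zero_le_one⟩
  rwa [zero_sub, dotProduct_neg, dotProduct_comm] at h0

theorem apply_sub_dotProduct_le_of_forall_mem_Icc [DecidableEq ι]
    (h : ∀ p : ι → ℝ, (∀ i, p i ∈ Set.Icc (0 : ℝ) 1) → z ⬝ᵥ (p - q) ≤ ε) (j : ι) :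
    z j - q ⬝ᵥ z ≤ ε := by
  have hj := h (Pi.single j 1) fun i => by
    rcases eq_or_ne i j with rfl | hij <;> simp [*]
  rwa [dotProduct_sub, dotProduct_single_one, dotProduct_comm] at hj

end UnitCubeVI

theorem eps_strong_solution_is_eps_walrasian_general
    {n : ℕ} (Z : (Fin n → ℝ) → Set (Fin n → ℝ))
    (weakWalras : ∀ p : Fin n → ℝ, (∀ i, 0 ≤ p i) → ∀ z ∈ Z p,
      ∑ j, p j * z j ≤ 0)
    (ε : ℝ) (hε : 0 ≤ ε)
    (ps : Fin n → ℝ) (hps : ∀ i, ps i ∈ Set.Icc (0 : ℝ) 1)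
    (z : Fin n → ℝ) (hz : z ∈ Z ps)
    (hstrong : ∀ p : Fin n → ℝ, (∀ i, p i ∈ Set.Icc (0 : ℝ) 1) →
      ∑ j, z j * (p j - ps j) ≤ ε) :
    (∀ j, z j ≤ ε) ∧ (-ε ≤ ∑ j, ps j * z j ∧ ∑ j, ps j * z j ≤ ε) := by
  have hvi : ∀ p : Fin n → ℝ, (∀ i, p i ∈ Set.Icc (0 : ℝ) 1) → z ⬝ᵥ (p - ps) ≤ ε := hstrong
  have hwalras : ps ⬝ᵥ z ≤ 0 := weakWalras ps (fun i => (hps i).1) z hz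
  refine ⟨fun j => ?_, neg_le.mp (neg_dotProduct_le_of_forall_mem_Icc hvi), hwalras.trans hε⟩
  linarith [apply_sub_dotProduct_le_of_forall_mem_Icc hvi j]

/-- In a balanced economy, every ε-strong solution of the VI `([0,1]ⁿ, -Z)` is an
ε-Walrasian equilibrium. -/
theorem eps_strong_solution_is_eps_walrasian
    {n : ℕ} (Z : (Fin n → ℝ) → Set (Fin n → ℝ))
    (hom : ∀ lam : ℝ, 0 < lam → ∀ p : Fin n → ℝ, (∀ i, 0 ≤ p i) →
      Z (lam • p) = Z p)
    (weakWalras : ∀ p : Fin n → ℝ, (∀ i, 0 ≤ p i) → ∀ z ∈ Z p,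
      ∑ j, p j * z j ≤ 0)
    (ε : ℝ) (hε : 0 ≤ ε)
    (ps : Fin n → ℝ) (hps : ∀ i, ps i ∈ Set.Icc (0 : ℝ) 1)
    (z : Fin n → ℝ) (hz : z ∈ Z ps)
    (hstrong : ∀ p : Fin n → ℝ, (∀ i, p i ∈ Set.Icc (0 : ℝ) 1) →
      ∑ j, z j * (p j - ps j) ≤ ε) :
    (∀ j, z j ≤ ε) ∧ (-ε ≤ ∑ j, ps j * z j ∧ ∑ j, ps j * z j ≤ ε) :=
  eps_strong_solution_is_eps_walrasian_general Z weakWalras ε hε ps hps z hz hstrong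
end

section
/- In an ℓ-elastic economy with excess demand z(p) = d(p) - s(p), for any 1-strongly-convex differentiable kernel h: ℝ₊ⁿ → ℝ, and for all p, q ∈ ℝ₊₊ⁿ: (1/2)‖z(q) - z(p)‖² ≤ (ℓ(‖d(p)‖ + ‖s(p)‖)/‖p‖_∞)² · D_h(q, p). -/
/-!
Elasticity bounds the relative change of each `f_j` by `ℓ` times the relative change of any
single price. Choosing the price `k` at which `p` is maximal gives
`|f_j(q) - f_j(p)| ≤ ℓ |f_j(p)| ‖q - p‖ / ‖p‖_∞`, hence
`‖f(q) - f(p)‖ ≤ ℓ ‖f(p)‖ ‖q - p‖ / ‖p‖_∞` for `f = d` and `f = s`; the triangle inequality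
bounds `‖z(q) - z(p)‖` by their sum, and 1-strong convexity of `h` gives
`½‖q - p‖² ≤ D_h(q, p)`.
-/

open scoped RealInnerProductSpace Topology
open Set Filter

theorem ConvexOn.le_sub_of_hasFDerivAt {E : Type*} [NormedAddCommGroup E] [NormedSpace ℝ E]
    {g : E → ℝ} {g' : E →L[ℝ] ℝ} {x : E} (hg : ConvexOn ℝ univ g) (hx : HasFDerivAt g g' x)
    (y : E) : g' (y - x) ≤ g y - g x := by
  have hline : HasDerivAt (g ∘ AffineMap.lineMap (k := ℝ) x y) (g' (y - x)) 0 :=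
    hx.comp_hasDerivAt_of_eq 0 AffineMap.hasDerivAt_lineMap (by simp)
  simpa [slope_def_field] using
    (hg.comp_affineMap _).le_slope_of_hasDerivAt (mem_univ 0) (mem_univ 1) zero_lt_one hline

theorem half_norm_sub_sq_le_of_convexOn_sub_half_norm_sq {E : Type*} [NormedAddCommGroup E]
    [InnerProductSpace ℝ E] [CompleteSpace E] {h : E → ℝ} {h' p : E}
    (hp : HasGradientAt h h' p) (hconv : ConvexOn ℝ univ (fun u => h u - 1 / 2 * ‖u‖ ^ 2))
    (q : E) : 1 / 2 * ‖q - p‖ ^ 2 ≤ h q - h p - ⟪h', q - p⟫ := by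
  have hderiv := (hasGradientAt_iff_hasFDerivAt.mp hp).sub
    ((hasStrictFDerivAt_norm_sq p).hasFDerivAt.const_mul (1 / 2))
  have htangent := hconv.le_sub_of_hasFDerivAt hderiv q
  simp only [sub_apply, InnerProductSpace.toDual_apply_apply, smul_apply, innerSL_apply_apply,
    smul_eq_mul, nsmul_eq_mul, Nat.cast_ofNat] at htangent
  have hpolar : 1 / 2 * ‖q - p‖ ^ 2 = 1 / 2 * ‖q‖ ^ 2 - 1 / 2 * ‖p‖ ^ 2 - ⟪p, q - p⟫ := by
    rw [norm_sub_sq_real, inner_sub_right, real_inner_self_eq_norm_sq, real_inner_comm]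
    ring
  linarith

theorem EuclideanSpace.norm_le_mul_norm_of_abs_le {ι : Type*} [Fintype ι]
    {x y : EuclideanSpace ℝ ι} {C : ℝ} (hC : 0 ≤ C) (h : ∀ i, |x i| ≤ C * |y i|) :
    ‖x‖ ≤ C * ‖y‖ := by
  refine le_of_sq_le_sq ?_ (by positivity)
  rw [mul_pow, EuclideanSpace.norm_sq_eq, EuclideanSpace.norm_sq_eq, Finset.mul_sum]
  gcongr with i
  simpa only [Real.norm_eq_abs, mul_pow, sq_abs] using pow_le_pow_left₀ (abs_nonneg _) (h i) 2

section Elasticity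

variable {ι κ : Type*}

/-- Since `x / 0 = 0`, the condition says nothing about pairs with `f p j = 0` or `q k = p k`;
those are recovered by `apply_eq_zero_of_apply_eq_zero` and `apply_eq_of_apply_eq`. -/
def IsElastic (ℓ : ℝ) (f : EuclideanSpace ℝ ι → EuclideanSpace ℝ κ) : Prop :=
  ∀ p q : EuclideanSpace ℝ ι, (∀ i, 0 ≤ p i) → (∀ i, 0 ≤ q i) → ∀ j k,
    |(f q j - f p j) / f p j * (p k / (q k - p k))| ≤ ℓ

namespace IsElastic

variable {ℓ : ℝ} {f : EuclideanSpace ℝ ι → EuclideanSpace ℝ κ} {p q : EuclideanSpace ℝ ι}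
  {j : κ} {k : ι}

theorem abs_sub_mul_le_of_ne (hf : IsElastic ℓ f) (hp : ∀ i, 0 ≤ p i) (hq : ∀ i, 0 ≤ q i)
    (hfp : f p j ≠ 0) (hk : q k ≠ p k) :
    |f q j - f p j| * p k ≤ ℓ * |f p j| * |q k - p k| := by
  have h := hf p q hp hq j k
  rw [abs_mul, abs_div, abs_div, abs_of_nonneg (hp k), div_mul_div_comm,
    div_le_iff₀ (by positivity)] at h
  linarith

theorem apply_eq_zero_of_apply_eq_zero_of_mul_abs_sub_lt (hf : IsElastic ℓ f)
    {x y : EuclideanSpace ℝ ι} (hx : ∀ i, 0 ≤ x i) (hy : ∀ i, 0 ≤ y i)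
    (hxy : ∀ k, ℓ * |x k - y k| < y k) (hfx : f x j = 0) : f y j = 0 := by
  by_contra hfy
  obtain ⟨k, hk⟩ : ∃ k, x k ≠ y k := by
    by_contra! hxy'
    exact hfy (PiLp.ext hxy' ▸ hfx)
  have h := hf.abs_sub_mul_le_of_ne hy hx hfy hk
  rw [hfx, zero_sub, abs_neg] at h
  have : y k ≤ ℓ * |x k - y k| :=
    le_of_mul_le_mul_left (by linarith) (abs_pos.mpr hfy)
  exact (hxy k).not_ge this

variable [Fintype ι]

theorem apply_eq_zero_of_apply_eq_zero (hf : IsElastic ℓ f) (hp : ∀ i, 0 < p i)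
    (hq : ∀ i, 0 < q i) (hfp : f p j = 0) : f q j = 0 := by
  -- `f x j = 0` is locally constant in `x` on the positive orthant, which is connected.
  have hconvex : Convex ℝ {x : EuclideanSpace ℝ ι | ∀ i, 0 < x i} :=
    fun x hx y hy a b ha hb hab i => by
      simpa using convex_Ioi (0 : ℝ) (hx i) (hy i) ha hb hab
  refine hconvex.isPreconnected.induction₂' (fun x y => f x j = 0 → f y j = 0)
    (fun x hx => ?_) (fun x y z _ _ _ hxy hyz => hyz ∘ hxy) hp hq hfp
  have hnear : ∀ᶠ y in 𝓝 x, ∀ k, ℓ * |x k - y k| < y k ∧ ℓ * |y k - x k| < x k := by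
    refine eventually_all.2 fun k => ?_
    have hcoord : Tendsto (fun y : EuclideanSpace ℝ ι => y k) (𝓝 x) (𝓝 (x k)) :=
      (EuclideanSpace.proj k).continuous.tendsto x
    have hgap : Tendsto (fun y : EuclideanSpace ℝ ι => ℓ * |x k - y k|) (𝓝 x) (𝓝 0) := by
      simpa using (((tendsto_const_nhds (x := x k)).sub hcoord).abs.const_mul ℓ)
    filter_upwards [hgap.eventually_lt hcoord (hx k),
      hgap.eventually_lt tendsto_const_nhds (hx k)] with y h₁ h₂
    exact ⟨h₁, abs_sub_comm (x k) (y k) ▸ h₂⟩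
  filter_upwards [nhdsWithin_le_nhds hnear, self_mem_nhdsWithin] with y hxy hy
  exact ⟨hf.apply_eq_zero_of_apply_eq_zero_of_mul_abs_sub_lt (fun i => (hx i).le)
      (fun i => (hy i).le) fun k => (hxy k).1,
    hf.apply_eq_zero_of_apply_eq_zero_of_mul_abs_sub_lt (fun i => (hy i).le)
      (fun i => (hx i).le) fun k => (hxy k).2⟩

theorem apply_eq_of_apply_eq (hf : IsElastic ℓ f) (hp : ∀ i, 0 < p i) (hq : ∀ i, 0 < q i)
    (hk : q k = p k) : f q j = f p j := by
  classical
  by_cases hfp : f p j = 0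
  · rw [hfp, hf.apply_eq_zero_of_apply_eq_zero hp hq hfp]
  -- `f p j` and `f q j` are both limits of `f (q + ε eₖ) j`, whose `k`-th price differs from
  -- theirs.
  have hfq : f q j ≠ 0 := fun hfq => hfp (hf.apply_eq_zero_of_apply_eq_zero hq hp hfq)
  let r : ℝ → EuclideanSpace ℝ ι := fun ε => q + EuclideanSpace.single k ε
  have hrk : ∀ ε, r ε k = q k + ε := fun ε => by simp [r]
  have hr : ∀ ε > 0, ∀ i, 0 ≤ r ε i := fun ε hε i => by
    by_cases hi : i = k <;> simp [r, hi, (hq i).le, add_nonneg (hq k).le hε.le]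
  have hlim : ∀ b : EuclideanSpace ℝ ι, (∀ i, 0 < b i) → f b j ≠ 0 → b k = q k →
      Tendsto (fun ε => f (r ε) j) (𝓝[>] 0) (𝓝 (f b j)) := by
    intro b hb hfb hbk
    have hbound : Tendsto (fun ε => ℓ * |f b j| * ε / b k) (𝓝[>] 0) (𝓝 0) := by
      simpa using (((continuous_const.mul continuous_id).div_const (b k)).tendsto 0).mono_left
        nhdsWithin_le_nhds
    rw [tendsto_iff_norm_sub_tendsto_zero]
    refine squeeze_zero' (.of_forall fun _ => norm_nonneg _) ?_ hbound
    filter_upwards [self_mem_nhdsWithin] with ε (hε : 0 < ε)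
    have h := hf.abs_sub_mul_le_of_ne (fun i => (hb i).le) (hr ε hε) hfb
      (by rw [hrk, hbk]; linarith)
    rw [hrk, ← hbk, add_sub_cancel_left, abs_of_pos hε] at h
    rw [Real.norm_eq_abs, le_div_iff₀ (hb k)]
    exact h
  exact tendsto_nhds_unique (hlim q hq hfq rfl) (hlim p hp hfp hk.symm)

theorem abs_sub_mul_le (hf : IsElastic ℓ f) (hp : ∀ i, 0 < p i) (hq : ∀ i, 0 < q i)
    (j : κ) (k : ι) : |f q j - f p j| * p k ≤ ℓ * |f p j| * |q k - p k| := by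
  by_cases hfp : f p j = 0
  · simp [hfp, hf.apply_eq_zero_of_apply_eq_zero hp hq hfp]
  by_cases hk : q k = p k
  · simp [hf.apply_eq_of_apply_eq hp hq hk, hk]
  exact hf.abs_sub_mul_le_of_ne (fun i => (hp i).le) (fun i => (hq i).le) hfp hk

theorem norm_sub_le [Fintype κ] [Nonempty ι] (hf : IsElastic ℓ f) (hℓ : 0 ≤ ℓ)
    (hp : ∀ i, 0 < p i) (hq : ∀ i, 0 < q i) : ‖f q - f p‖ ≤ ℓ * ‖q - p‖ / (⨆ k, p k) * ‖f p‖ := by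
  obtain ⟨k, hk⟩ := exists_eq_ciSup_of_finite (f := fun k => p k)
  rw [← hk]
  have hpk := hp k
  refine EuclideanSpace.norm_le_mul_norm_of_abs_le (by positivity) fun j => ?_
  rw [show ℓ * ‖q - p‖ / p k * |f p j| = ℓ * |f p j| * ‖q - p‖ / p k by ring, le_div_iff₀ hpk]
  calc |(f q - f p) j| * p k = |f q j - f p j| * p k := rfl
    _ ≤ ℓ * |f p j| * |q k - p k| := hf.abs_sub_mul_le hp hq j k
    _ ≤ ℓ * |f p j| * ‖q - p‖ := by
      gcongr
      exact PiLp.norm_apply_le (q - p) k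

end IsElastic

end Elasticity

theorem bregman_continuity_of_elastic_economy_general
    {n : ℕ} (hn : 0 < n)
    (d s : EuclideanSpace ℝ (Fin n) → EuclideanSpace ℝ (Fin n))
    (ℓ : ℝ) (hℓ : 0 ≤ ℓ)
    (helastic_d : ∀ p q : EuclideanSpace ℝ (Fin n),
      (∀ i, 0 ≤ p i) → (∀ i, 0 ≤ q i) → ∀ j k : Fin n,
        |(d q j - d p j) / d p j * (p k / (q k - p k))| ≤ ℓ)
    (helastic_s : ∀ p q : EuclideanSpace ℝ (Fin n),
      (∀ i, 0 ≤ p i) → (∀ i, 0 ≤ q i) → ∀ j k : Fin n,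
        |(s q j - s p j) / s p j * (p k / (q k - p k))| ≤ ℓ)
    (h : EuclideanSpace ℝ (Fin n) → ℝ) (h' : EuclideanSpace ℝ (Fin n) → EuclideanSpace ℝ (Fin n))
    (hdiff : ∀ x, HasGradientAt h (h' x) x)
    (hconv : ConvexOn ℝ Set.univ (fun u => h u - 1 / 2 * ‖u‖ ^ 2))
    (D : EuclideanSpace ℝ (Fin n) → EuclideanSpace ℝ (Fin n) → ℝ)
    (hD : ∀ u v, D u v = h u - h v - ⟪h' v, u - v⟫) :
    ∀ p q : EuclideanSpace ℝ (Fin n), (∀ i, 0 < p i) → (∀ i, 0 < q i) →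
      1 / 2 * ‖(d q - s q) - (d p - s p)‖ ^ 2
        ≤ (ℓ * (‖d p‖ + ‖s p‖) / (⨆ k : Fin n, p k)) ^ 2 * D q p := by
  intro p q hp hq
  have : Nonempty (Fin n) := Fin.pos_iff_nonempty.mp hn
  have hd : ‖d q - d p‖ ≤ ℓ * ‖q - p‖ / (⨆ k, p k) * ‖d p‖ :=
    IsElastic.norm_sub_le helastic_d hℓ hp hq
  have hs : ‖s q - s p‖ ≤ ℓ * ‖q - p‖ / (⨆ k, p k) * ‖s p‖ :=
    IsElastic.norm_sub_le helastic_s hℓ hp hq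
  have hz : ‖(d q - s q) - (d p - s p)‖ ≤ ℓ * (‖d p‖ + ‖s p‖) / (⨆ k, p k) * ‖q - p‖ :=
    calc ‖(d q - s q) - (d p - s p)‖ = ‖(d q - d p) - (s q - s p)‖ := by abel_nf
      _ ≤ ‖d q - d p‖ + ‖s q - s p‖ := norm_sub_le _ _
      _ ≤ ℓ * ‖q - p‖ / (⨆ k, p k) * ‖d p‖ + ℓ * ‖q - p‖ / (⨆ k, p k) * ‖s p‖ :=
        add_le_add hd hs
      _ = _ := by ring
  have hbregman : 1 / 2 * ‖q - p‖ ^ 2 ≤ D q p :=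
    hD q p ▸ half_norm_sub_sq_le_of_convexOn_sub_half_norm_sq (hdiff p) hconv q
  calc 1 / 2 * ‖(d q - s q) - (d p - s p)‖ ^ 2
      ≤ 1 / 2 * (ℓ * (‖d p‖ + ‖s p‖) / (⨆ k, p k) * ‖q - p‖) ^ 2 := by gcongr
    _ = (ℓ * (‖d p‖ + ‖s p‖) / (⨆ k, p k)) ^ 2 * (1 / 2 * ‖q - p‖ ^ 2) := by ring
    _ ≤ (ℓ * (‖d p‖ + ‖s p‖) / (⨆ k, p k)) ^ 2 * D q p := by gcongr

/-- Bregman-continuity bound for ℓ-elastic economies: for an economy with aggregate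
demand `d`, aggregate supply `s`, excess demand `z = d - s`, elasticities bounded by `ℓ`,
and a 1-strongly-convex differentiable kernel `h`, one has
`(1/2)‖z(q) - z(p)‖² ≤ (ℓ(‖d(p)‖ + ‖s(p)‖)/‖p‖_∞)² · D_h(q,p)`. -/
theorem bregman_continuity_of_elastic_economy
    {n : ℕ} (hn : 0 < n)
    (d s : EuclideanSpace ℝ (Fin n) → EuclideanSpace ℝ (Fin n))
    (hd_pos : ∀ p : EuclideanSpace ℝ (Fin n), (∀ i, 0 ≤ p i) → ∀ j, 0 ≤ d p j)
    (hs_pos : ∀ p : EuclideanSpace ℝ (Fin n), (∀ i, 0 ≤ p i) → ∀ j, 0 ≤ s p j)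
    (ℓ : ℝ) (hℓ : 0 ≤ ℓ)
    (helastic_d : ∀ p q : EuclideanSpace ℝ (Fin n),
      (∀ i, 0 ≤ p i) → (∀ i, 0 ≤ q i) → ∀ j k : Fin n,
        |(d q j - d p j) / d p j * (p k / (q k - p k))| ≤ ℓ)
    (helastic_s : ∀ p q : EuclideanSpace ℝ (Fin n),
      (∀ i, 0 ≤ p i) → (∀ i, 0 ≤ q i) → ∀ j k : Fin n,
        |(s q j - s p j) / s p j * (p k / (q k - p k))| ≤ ℓ)
    (h : EuclideanSpace ℝ (Fin n) → ℝ) (h' : EuclideanSpace ℝ (Fin n) → EuclideanSpace ℝ (Fin n))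
    (hdiff : ∀ x, HasGradientAt h (h' x) x)
    (hconv : ConvexOn ℝ Set.univ (fun u => h u - 1 / 2 * ‖u‖ ^ 2))
    (D : EuclideanSpace ℝ (Fin n) → EuclideanSpace ℝ (Fin n) → ℝ)
    (hD : ∀ u v, D u v = h u - h v - ⟪h' v, u - v⟫) :
    ∀ p q : EuclideanSpace ℝ (Fin n), (∀ i, 0 < p i) → (∀ i, 0 < q i) →
      1 / 2 * ‖(d q - s q) - (d p - s p)‖ ^ 2
        ≤ (ℓ * (‖d p‖ + ‖s p‖) / (⨆ k : Fin n, p k)) ^ 2 * D q p :=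
  bregman_continuity_of_elastic_economy_general hn d s ℓ hℓ helastic_d helastic_s h h' hdiff hconv D
    hD
end
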